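/- arXiv:quant-ph/0506260 — 2 statements merged into one kernel-verified Lean document; each statement's English description precedes it below -/
import Mathlib

section
/- Let H' be a finite-dimensional complex Hilbert space and let f be a nonnegative function on unit vectors of H' satisfying |f(φ) − f(ψ)| ≤ 2‖φ − ψ‖₂ for all unit vectors φ, ψ. Let S₀ ⊆ H' be a fixed subspace and φ₀ a fixed unit vector in S₀, and let S = U S₀ with U distributed according to the Haar measure on the unitary group of H'. Then for any δ > 0 and any 0 < ε < 1/2, Pr_S( max over unit vectors φ ∈ S of f(φ) > δ ) ≤ (5/ε)^{2 dim S₀} · Pr_U( f(U φ₀) > δ − ε ). -/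
open Matrix MeasureTheory
open scoped BigOperators ENNReal

noncomputable section

/-- Matrices over `ℂ` are measurable via the entrywise (pi-type) σ-algebra. -/
instance matrixMeasurableSpace {m n : Type*} : MeasurableSpace (Matrix m n ℂ) :=
  (inferInstance : MeasurableSpace (m → n → ℂ))

/-- The Euclidean (Hilbert-space) norm of a vector. -/
def evnorm {n : Type*} [Fintype n] (v : n → ℂ) : ℝ := Real.sqrt (∑ i, ‖v i‖ ^ 2)

end

/-!
A maximal `ε/2`-separated subset of the unit sphere of `S₀` is an `ε/2`-net, and comparing the
volumes of disjoint balls bounds its size by `(1 + 4/ε)^{2 dim S₀} ≤ (5/ε)^{2 dim S₀}`. If `f`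
exceeds `δ` at a unit vector `Uy` of `U S₀`, the Lipschitz bound gives `f(Uψ) > δ - ε` for a net
point `ψ` near `y`, so the event is covered by a union over the net. Each event `f(Uψ) > δ - ε`
has the same probability as `f(Uφ₀) > δ - ε`: writing `ψ = Vφ₀` with `V` unitary, it is the
preimage of the latter under `U ↦ UV`, and a left-invariant probability measure on the compact
group is also right-invariant.
-/

open Metric Module
open scoped NNReal

section CompactGroup

variable {G : Type*} [Group G] [TopologicalSpace G] [IsTopologicalGroup G] [CompactSpace G]
  [MeasurableSpace G] [BorelSpace G]

theorem isMulRightInvariant_of_compactSpace (μ : Measure G) [IsProbabilityMeasure μ]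
    [μ.IsMulLeftInvariant] : μ.IsMulRightInvariant := by
  have haar (ν : Measure G) [IsProbabilityMeasure ν] [ν.IsMulLeftInvariant] : ν.IsHaarMeasure :=
    ν.isHaarMeasure_of_isCompact_nonempty_interior Set.univ isCompact_univ (by simp) (by simp)
      (by simp)
  have := haar μ
  refine ⟨fun g => ?_⟩
  have : IsProbabilityMeasure (μ.map (· * g)) :=
    Measure.isProbabilityMeasure_map (measurable_mul_const g).aemeasurable
  have := haar (μ.map (· * g))
  exact Measure.isHaarMeasure_eq_of_isProbabilityMeasure _ _

end CompactGroup

section Transitivity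

variable {𝕜 E : Type*} [RCLike 𝕜] [NormedAddCommGroup E] [InnerProductSpace 𝕜 E]
  [FiniteDimensional 𝕜 E]

theorem exists_orthonormalBasis_apply_eq {ι : Type*} [Fintype ι]
    (hcard : finrank 𝕜 E = Fintype.card ι) (i : ι) {x : E} (hx : ‖x‖ = 1) :
    ∃ b : OrthonormalBasis ι 𝕜 E, b i = x := by
  obtain ⟨b, hb⟩ := Orthonormal.exists_orthonormalBasis_extension_of_card_eq hcard
    (v := fun _ => x) (s := {i}) (orthonormal_subsingleton_iff.mpr fun _ => hx)
  exact ⟨b, hb i rfl⟩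

theorem exists_linearIsometryEquiv_apply_eq {x y : E} (hx : ‖x‖ = 1) (hy : ‖y‖ = 1) :
    ∃ L : E ≃ₗᵢ[𝕜] E, L x = y := by
  have : Nontrivial E := nontrivial_of_ne x 0 (norm_ne_zero_iff.mp (by simp [hx]))
  let i : Fin (finrank 𝕜 E) := ⟨0, finrank_pos⟩
  obtain ⟨b, rfl⟩ := exists_orthonormalBasis_apply_eq (Fintype.card_fin _).symm i hx
  obtain ⟨c, rfl⟩ := exists_orthonormalBasis_apply_eq (Fintype.card_fin _).symm i hy
  exact ⟨b.repr.trans c.repr.symm, by simp [OrthonormalBasis.repr_self, c.repr_symm_single]⟩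

end Transitivity

theorem evnorm_eq_norm_toLp {n : Type*} [Fintype n] (v : n → ℂ) :
    evnorm v = ‖WithLp.toLp 2 v‖ := by
  rw [EuclideanSpace.norm_eq]; rfl

namespace Matrix

variable {n : Type*} [Fintype n] [DecidableEq n]

instance : BorelSpace (Matrix n n ℂ) := Pi.borelSpace

instance : BorelSpace (unitaryGroup n ℂ) := Subtype.borelSpace _

instance : CompactSpace (unitaryGroup n ℂ) := by
  have hK : IsCompact (Set.univ.pi fun _ => Set.univ.pi fun _ => closedBall 0 1 :
      Set (Matrix n n ℂ)) :=
    isCompact_univ_pi fun _ => isCompact_univ_pi fun _ => isCompact_closedBall 0 1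
  refine isCompact_iff_compactSpace.mp <|
    hK.of_isClosed_subset (isClosed_unitary (R := Matrix n n ℂ)) fun U hU i _ j _ => ?_
  simpa using entry_norm_bound_of_unitary hU i j

theorem evnorm_unitary_mulVec (U : unitaryGroup n ℂ) (v : n → ℂ) :
    evnorm ((U : Matrix n n ℂ) *ᵥ v) = evnorm v := by
  have h : WithLp.toLp 2 ((U : Matrix n n ℂ) *ᵥ v) =
      toEuclideanCLM (𝕜 := ℂ) (U : Matrix n n ℂ) (WithLp.toLp 2 v) := rfl
  rw [evnorm_eq_norm_toLp, evnorm_eq_norm_toLp, h]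
  exact ContinuousLinearMap.norm_map_of_mem_unitary (Unitary.map_mem _ U.2) _

theorem exists_unitary_mulVec_eq {φ ψ : n → ℂ} (hφ : evnorm φ = 1) (hψ : evnorm ψ = 1) :
    ∃ V : unitaryGroup n ℂ, (V : Matrix n n ℂ) *ᵥ φ = ψ := by
  rw [evnorm_eq_norm_toLp] at hφ hψ
  obtain ⟨L, hL⟩ := exists_linearIsometryEquiv_apply_eq (𝕜 := ℂ) hφ hψ
  let V := (toEuclideanCLM (n := n) (𝕜 := ℂ)).symm (Unitary.linearIsometryEquiv.symm L)
  have hV : V ∈ unitaryGroup n ℂ :=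
    Unitary.map_mem (S := Matrix n n ℂ) (toEuclideanCLM (n := n) (𝕜 := ℂ)).symm
      (Unitary.linearIsometryEquiv.symm L).2
  refine ⟨⟨V, hV⟩, ?_⟩
  calc V *ᵥ φ = WithLp.ofLp (toEuclideanCLM (𝕜 := ℂ) V (WithLp.toLp 2 φ)) := rfl
    _ = ψ := by simp [V, hL]

theorem measure_setOf_unitary_mulVec_eq (ν : Measure (unitaryGroup n ℂ)) [IsProbabilityMeasure ν]
    [ν.IsMulLeftInvariant] (P : (n → ℂ) → Prop) {φ ψ : n → ℂ} (hφ : evnorm φ = 1)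
    (hψ : evnorm ψ = 1) :
    ν {U | P ((U : Matrix n n ℂ) *ᵥ ψ)} = ν {U | P ((U : Matrix n n ℂ) *ᵥ φ)} := by
  have := isMulRightInvariant_of_compactSpace ν
  obtain ⟨V, rfl⟩ := exists_unitary_mulVec_eq hφ hψ
  have hpre : {U : unitaryGroup n ℂ | P ((U : Matrix n n ℂ) *ᵥ ((V : Matrix n n ℂ) *ᵥ φ))} =
      (· * V) ⁻¹' {U | P ((U : Matrix n n ℂ) *ᵥ φ)} := by
    ext U
    simp [mulVec_mulVec]
  rw [hpre, measure_preimage_mul_right]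

theorem setOf_exists_mem_map_mulVecLin_subset_biUnion {f : (n → ℂ) → ℝ}
    (hf_lip : ∀ x y : n → ℂ, evnorm x = 1 → evnorm y = 1 → |f x - f y| ≤ 2 * evnorm (x - y))
    {S : Submodule ℂ (n → ℂ)} {T : Finset (n → ℂ)} {δ ε : ℝ} (hT : ∀ ψ ∈ T, evnorm ψ = 1)
    (hcover : ∀ y ∈ S, evnorm y = 1 → ∃ ψ ∈ T, evnorm (y - ψ) ≤ ε / 2) :
    {U : unitaryGroup n ℂ | ∃ x ∈ S.map (U : Matrix n n ℂ).mulVecLin, evnorm x = 1 ∧ δ < f x} ⊆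
      ⋃ ψ ∈ T, {U | δ - ε < f ((U : Matrix n n ℂ) *ᵥ ψ)} := by
  rintro U ⟨_, ⟨y, hyS, rfl⟩, hy, hfy⟩
  rw [mulVecLin_apply] at hy hfy
  obtain ⟨ψ, hψT, hyψ⟩ := hcover y hyS (by rwa [evnorm_unitary_mulVec] at hy)
  have hlip := hf_lip _ ((U : Matrix n n ℂ) *ᵥ ψ) hy
    (by rw [evnorm_unitary_mulVec]; exact hT ψ hψT)
  rw [← mulVec_sub, evnorm_unitary_mulVec] at hlip
  exact Set.mem_biUnion hψT
    (show δ - ε < f ((U : Matrix n n ℂ) *ᵥ ψ) by linarith [(abs_le.mp hlip).2, hfy])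

end Matrix



section Packing

variable {V : Type*} [NormedAddCommGroup V] [NormedSpace ℝ V] [FiniteDimensional ℝ V]

theorem card_le_of_isSeparated_of_subset_closedBall {r : ℝ≥0} (hr : 0 < r) {T : Finset V}
    (hT : (T : Set V) ⊆ closedBall 0 1) (hsep : IsSeparated r (T : Set V)) :
    (T.card : ℝ) ≤ (1 + 2 / r) ^ finrank ℝ V := by
  borelize V
  let μ : Measure V := Measure.addHaar
  have hr2 : (0 : ℝ) < r / 2 := by positivity
  have hdisj : (T : Set V).PairwiseDisjoint fun x => ball x (r / 2) := by
    intro x hx y hy hxy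
    have h : (r : ℝ≥0∞) < edist x y := hsep hx hy hxy
    rw [edist_nndist, ENNReal.coe_lt_coe, ← NNReal.coe_lt_coe, coe_nndist] at h
    exact ball_disjoint_ball (by linarith)
  have hsub : ⋃ x ∈ T, ball x (r / 2) ⊆ ball (0 : V) (1 + r / 2) :=
    Set.iUnion₂_subset fun x hx => ball_subset_ball' <| by
      have := hT hx
      rw [mem_closedBall] at this
      linarith
  have hvol : (T.card : ℝ≥0∞) * ENNReal.ofReal ((r / 2) ^ finrank ℝ V) * μ (ball 0 1) ≤
      ENNReal.ofReal ((1 + r / 2) ^ finrank ℝ V) * μ (ball 0 1) :=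
    calc (T.card : ℝ≥0∞) * ENNReal.ofReal ((r / 2) ^ finrank ℝ V) * μ (ball 0 1)
        = μ (⋃ x ∈ T, ball x (r / 2)) := by
          rw [measure_biUnion_finset hdisj fun x _ => measurableSet_ball]
          simp only [μ.addHaar_ball_of_pos _ hr2, Finset.sum_const, nsmul_eq_mul, mul_assoc]
      _ ≤ μ (ball 0 (1 + r / 2)) := measure_mono hsub
      _ = ENNReal.ofReal ((1 + r / 2) ^ finrank ℝ V) * μ (ball 0 1) :=
        μ.addHaar_ball_of_pos _ (by positivity)
  have hvol' := (ENNReal.mul_le_mul_iff_left (measure_ball_pos μ _ one_pos).ne'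
    measure_ball_lt_top.ne).1 hvol
  rw [← ENNReal.ofReal_natCast, ← ENNReal.ofReal_mul (by positivity),
    ENNReal.ofReal_le_ofReal_iff (by positivity)] at hvol'
  calc (T.card : ℝ) = T.card * (r / 2) ^ finrank ℝ V / (r / 2) ^ finrank ℝ V := by field_simp
    _ ≤ (1 + r / 2) ^ finrank ℝ V / (r / 2) ^ finrank ℝ V := by gcongr
    _ = (1 + 2 / r) ^ finrank ℝ V := by rw [← div_pow]; congr 1; field_simp; ring

theorem packingNumber_ne_top_of_subset_closedBall {r : ℝ≥0} (hr : 0 < r) {A : Set V}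
    (hA : A ⊆ closedBall 0 1) : packingNumber r A ≠ ⊤ := by
  set N := ⌊(1 + 2 / (r : ℝ)) ^ finrank ℝ V⌋₊
  refine ne_top_of_le_ne_top (ENat.natCast_ne_top N) (iSup₂_le fun C hCA => iSup_le fun hC => ?_)
  by_contra! hlt
  obtain ⟨t, htC, ht⟩ := Set.exists_subset_encard_eq (k := (N + 1 : ℕ))
    (by exact_mod_cast Order.add_one_le_of_lt hlt)
  have htfin : t.Finite := Set.finite_of_encard_eq_coe ht
  have hcard := card_le_of_isSeparated_of_subset_closedBall hr (T := htfin.toFinset)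
    (by simpa using htC.trans (hCA.trans hA)) (by simpa using hC.subset htC)
  rw [← Set.ncard_eq_toFinset_card t htfin, Set.ncard_def, ht, ENat.toNat_natCast] at hcard
  exact (Nat.le_floor hcard).not_gt N.lt_succ_self

theorem exists_finset_isCover_card_le {r : ℝ≥0} (hr : 0 < r) {A : Set V}
    (hA : A ⊆ closedBall 0 1) :
    ∃ T : Finset V, ↑T ⊆ A ∧ IsCover r A T ∧ (T.card : ℝ) ≤ (1 + 2 / r) ^ finrank ℝ V := by
  have h := packingNumber_ne_top_of_subset_closedBall hr hA
  have hfin : (maximalSeparatedSet r A).Finite := by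
    rw [← Set.encard_ne_top_iff, encard_maximalSeparatedSet h]
    exact h
  refine ⟨hfin.toFinset, by simpa using maximalSeparatedSet_subset,
    by simpa using isCover_maximalSeparatedSet h, ?_⟩
  exact card_le_of_isSeparated_of_subset_closedBall hr
    (by simpa using maximalSeparatedSet_subset.trans hA)
    (by simpa using isSeparated_maximalSeparatedSet)

end Packing

theorem Submodule.exists_finset_sphere_cover {E : Type*} [NormedAddCommGroup E]
    [NormedSpace ℂ E] (W : Submodule ℂ E) [FiniteDimensional ℂ W] {r : ℝ} (hr : 0 < r) :
    ∃ T : Finset E, (∀ y ∈ T, y ∈ W ∧ ‖y‖ = 1) ∧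
      (T.card : ℝ) ≤ (1 + 2 / r) ^ (2 * finrank ℂ W) ∧
      ∀ x ∈ W, ‖x‖ = 1 → ∃ y ∈ T, ‖x - y‖ ≤ r := by
  classical
  obtain ⟨N, hNA, hNcover, hNcard⟩ := exists_finset_isCover_card_le (V := W)
    (r := r.toNNReal) (by simpa using hr) sphere_subset_closedBall
  rw [Real.coe_toNNReal _ hr.le, finrank_real_of_complex] at hNcard
  refine ⟨N.image Subtype.val, ?_, (Nat.cast_le.mpr Finset.card_image_le).trans hNcard,
    fun x hxW hx => ?_⟩
  · simp only [Finset.mem_image]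
    rintro _ ⟨y, hyN, rfl⟩
    exact ⟨y.2, by simpa using hNA hyN⟩
  · obtain ⟨y, hyN, hxy⟩ := hNcover (x := ⟨x, hxW⟩) (by simpa using hx)
    refine ⟨y, Finset.mem_image_of_mem _ hyN, ?_⟩
    replace hxy : edist (⟨x, hxW⟩ : W) y ≤ r.toNNReal := hxy
    rwa [edist_le_coe, ← dist_le_coe, Real.coe_toNNReal _ hr.le, dist_eq_norm] at hxy

theorem exists_evnorm_sphere_cover {n : Type*} [Fintype n] (S : Submodule ℂ (n → ℂ))
    {r : ℝ} (hr : 0 < r) :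
    ∃ T : Finset (n → ℂ), (∀ ψ ∈ T, ψ ∈ S ∧ evnorm ψ = 1) ∧
      (T.card : ℝ) ≤ (1 + 2 / r) ^ (2 * finrank ℂ S) ∧
      ∀ x ∈ S, evnorm x = 1 → ∃ ψ ∈ T, evnorm (x - ψ) ≤ r := by
  obtain ⟨T, hT, hcard, hcover⟩ :=
    (S.map (WithLp.linearEquiv 2 ℂ (n → ℂ)).symm.toLinearMap).exists_finset_sphere_cover hr
  rw [LinearEquiv.finrank_map_eq] at hcard
  refine ⟨T.image WithLp.ofLp, ?_, (Nat.cast_le.mpr Finset.card_image_le).trans hcard,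
    fun x hxS hx => ?_⟩
  · simp only [Finset.mem_image]
    rintro _ ⟨y, hyT, rfl⟩
    obtain ⟨hyS, hy⟩ := hT y hyT
    exact ⟨by simpa [Submodule.mem_map_equiv] using hyS, by simpa [evnorm_eq_norm_toLp] using hy⟩
  · obtain ⟨y, hyT, hxy⟩ := hcover (WithLp.toLp 2 x) (Submodule.mem_map_of_mem hxS)
      (by simpa [evnorm_eq_norm_toLp] using hx)
    exact ⟨y.ofLp, Finset.mem_image_of_mem _ hyT, by simpa [evnorm_eq_norm_toLp] using hxy⟩

theorem one_add_two_div_half_le {ε : ℝ} (hε : 0 < ε) (hε₁ : ε ≤ 1) : 1 + 2 / (ε / 2) ≤ 5 / ε := by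
  rw [show (5 : ℝ) / ε = 1 / ε + 2 / (ε / 2) by ring]
  gcongr
  rwa [le_div_iff₀ hε, one_mul]

theorem prob_max_over_random_subspace_le_general
    {n : Type*} [Fintype n] [DecidableEq n]
    (f : (n → ℂ) → ℝ)
    (hf_lip : ∀ x y : n → ℂ, evnorm x = 1 → evnorm y = 1 → |f x - f y| ≤ 2 * evnorm (x - y))
    (S₀ : Submodule ℂ (n → ℂ)) (φ₀ : n → ℂ) (hφ₀ : evnorm φ₀ = 1)
    (ν : Measure (Matrix.unitaryGroup n ℂ))
    [IsProbabilityMeasure ν] [ν.IsMulLeftInvariant]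
    (δ : ℝ) (ε : ℝ) (hε : 0 < ε) (hε' : ε < 1/2) :
    ν {U | ∃ x ∈ S₀.map (Matrix.mulVecLin (U : Matrix n n ℂ)), evnorm x = 1 ∧ δ < f x}
      ≤ ENNReal.ofReal ((5/ε) ^ (2 * Module.finrank ℂ S₀)) *
          ν {U | δ - ε < f ((U : Matrix n n ℂ).mulVec φ₀)} := by
  obtain ⟨T, hT, hTcard, hTcover⟩ := exists_evnorm_sphere_cover S₀ (half_pos hε)
  have hcard : (T.card : ℝ) ≤ (5 / ε) ^ (2 * finrank ℂ S₀) :=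
    hTcard.trans (pow_le_pow_left₀ (by positivity) (one_add_two_div_half_le hε (by linarith)) _)
  calc _ ≤ ∑ ψ ∈ T, ν {U | δ - ε < f ((U : Matrix n n ℂ) *ᵥ ψ)} :=
        (measure_mono (Matrix.setOf_exists_mem_map_mulVecLin_subset_biUnion hf_lip
          (fun ψ hψ => (hT ψ hψ).2) hTcover)).trans (measure_biUnion_finset_le _ _)
    _ = T.card * ν {U | δ - ε < f ((U : Matrix n n ℂ) *ᵥ φ₀)} := by
        rw [Finset.sum_congr rfl fun ψ hψ =>
          Matrix.measure_setOf_unitary_mulVec_eq ν (δ - ε < f ·) hφ₀ (hT ψ hψ).2,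
          Finset.sum_const, nsmul_eq_mul]
    _ ≤ _ := by
        gcongr
        rw [← ENNReal.ofReal_natCast]
        exact ENNReal.ofReal_le_ofReal hcard

/-- Existence of good subspaces / discretization. Let `H'` be a
finite-dimensional complex Hilbert space and `f` a nonnegative function on unit vectors with
`|f(φ) − f(ψ)| ≤ 2‖φ − ψ‖₂`.  Let `S₀ ⊆ H'` be a fixed subspace, `φ₀` a fixed unit vector
of `S₀`, and `S = U S₀` with `U` Haar-distributed on the unitary group of `H'`.  Then for any
`δ > 0` and `0 < ε < 1/2`,
`Pr_S( max_{unit φ ∈ S} f(φ) > δ ) ≤ (5/ε)^{2 dim S₀} · Pr_U( f(U φ₀) > δ − ε )`. -/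
theorem prob_max_over_random_subspace_le
    {n : Type*} [Fintype n] [DecidableEq n]
    (f : (n → ℂ) → ℝ)
    (hf_nonneg : ∀ x : n → ℂ, evnorm x = 1 → 0 ≤ f x)
    (hf_lip : ∀ x y : n → ℂ, evnorm x = 1 → evnorm y = 1 → |f x - f y| ≤ 2 * evnorm (x - y))
    (S₀ : Submodule ℂ (n → ℂ)) (φ₀ : n → ℂ) (hφ₀S : φ₀ ∈ S₀) (hφ₀ : evnorm φ₀ = 1)
    (ν : Measure (Matrix.unitaryGroup n ℂ))
    [IsProbabilityMeasure ν] [ν.IsMulLeftInvariant]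
    (δ : ℝ) (hδ : 0 < δ) (ε : ℝ) (hε : 0 < ε) (hε' : ε < 1/2) :
    ν {U | ∃ x ∈ S₀.map (Matrix.mulVecLin (U : Matrix n n ℂ)), evnorm x = 1 ∧ δ < f x}
      ≤ ENNReal.ofReal ((5/ε) ^ (2 * Module.finrank ℂ S₀)) *
          ν {U | δ - ε < f ((U : Matrix n n ℂ).mulVec φ₀)} :=
  prob_max_over_random_subspace_le_general f hf_lip S₀ φ₀ hφ₀ ν δ ε hε hε'
end

section
/- Let ψ₁ and ψ be pure states on (ℂ²)^{⊗N} (N even) with ‖E(ψ₁) − E(ψ)‖₁ ≤ δ. For each j, let H_{jQ} ⊆ H_{jP} be the support of Tr_{jR}[Π_j ψ₁ Π_j] (the subspace spanned by eigenvectors with nonzero eigenvalue), let Π_{jQ} be the orthogonal projector onto H_{jQ}, and set Π' = Σ_j Π_{jR} ⊗ Π_{jQ}, where Π_{jR} is the projector onto H_{jR}. Then Tr[Π' ψ Π'] ≥ 1 − δ/2. -/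
open Matrix MeasureTheory
open scoped Kronecker ComplexOrder BigOperators ENNReal

noncomputable section

/-- The trace norm `‖A‖₁ = Tr √(Aᴴ A)`. -/
def traceNorm {n : Type*} [Fintype n] [DecidableEq n] (A : Matrix n n ℂ) : ℝ :=
  ((Matrix.posSemidef_conjTranspose_mul_self A).1.eigenvectorUnitary.1 *
    diagonal (((↑) : ℝ → ℂ) ∘ (√·) ∘ (Matrix.posSemidef_conjTranspose_mul_self A).1.eigenvalues) *
    (star (Matrix.posSemidef_conjTranspose_mul_self A).1.eigenvectorUnitary : Matrix n n ℂ)).trace.re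

/-- The special unitary group SU(2). -/
abbrev SU2 := Matrix.specialUnitaryGroup (Fin 2) ℂ

/-- The tensor power representation `R^{⊗N}` of a 2×2 matrix, acting on `(ℂ²)^{⊗N}`
(whose standard basis is indexed by `Fin N → Fin 2`). -/
def tensorPow (N : ℕ) (Ω : Matrix (Fin 2) (Fin 2) ℂ) :
    Matrix (Fin N → Fin 2) (Fin N → Fin 2) ℂ :=
  Matrix.of fun s t => ∏ k, Ω (s k) (t k)

/-- The decohering channel `E(ρ) = ∫_{SU(2)} R(Ω)^{⊗N} ρ (R(Ω)^{⊗N})† dΩ`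
(entrywise Bochner integral with respect to the Haar measure `μ`). -/
def twirl (N : ℕ) (μ : Measure SU2) (ρ : Matrix (Fin N → Fin 2) (Fin N → Fin 2) ℂ) :
    Matrix (Fin N → Fin 2) (Fin N → Fin 2) ℂ :=
  Matrix.of fun s t =>
    ∫ Ω, (tensorPow N (Ω : Matrix (Fin 2) (Fin 2) ℂ) * ρ *
      (tensorPow N (Ω : Matrix (Fin 2) (Fin 2) ℂ))ᴴ) s t ∂μ

/-- The rank-one projector `|v⟩⟨v|` of a vector `v`. -/
def rankOne {n : Type*} (v : n → ℂ) : Matrix n n ℂ := Matrix.vecMulVec v (star v)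

/-- Basis index of the decomposition `⊕_{j=0}^{M} H_{jR} ⊗ H_{jP}` (here `N = 2M`,
`j` runs over the total angular momenta `0, 1, …, M`, `dim H_{jR} = 2j+1`,
`dim H_{jP} = dP j`). -/
abbrev DecompIdx (M : ℕ) (dP : Fin (M+1) → ℕ) := (j : Fin (M+1)) × (Fin (2*j.1+1) × Fin (dP j))

/-- Data exhibiting the isotypic decomposition `(ℂ²)^{⊗N} = ⊕_{j=0}^{N/2} H_{jR} ⊗ H_{jP}`
(for `N = 2M`) of the tensor power representation of SU(2):  `W` is a unitary change of basis,
`rep j` is the spin-`j` irrep (a `(2j+1)`-dimensional irreducible unitary representation) acting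
on `H_{jR}`, the multiplicity space `H_{jP}` has dimension
`dP j = binom(N, N/2−j)·(2j+1)/(N/2+j+1)`, and `W` intertwines `R^{⊗N}` with
`⊕_j (rep j ⊗ I_{jP})`. -/
structure SU2Decomp (M : ℕ) where
  dP : Fin (M+1) → ℕ
  hdP : ∀ j : Fin (M+1), dP j * (M + j.1 + 1) = (2*M).choose (M - j.1) * (2*j.1 + 1)
  W : Matrix (Fin (2*M) → Fin 2) (DecompIdx M dP) ℂ
  hW : W * Wᴴ = 1
  hW' : Wᴴ * W = 1
  rep : (j : Fin (M+1)) → SU2 → Matrix (Fin (2*j.1+1)) (Fin (2*j.1+1)) ℂ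
  hrep_unitary : ∀ j Ω, (rep j Ω) ∈ Matrix.unitaryGroup (Fin (2*j.1+1)) ℂ
  hrep_mul : ∀ j Ω₁ Ω₂, rep j (Ω₁ * Ω₂) = rep j Ω₁ * rep j Ω₂
  hrep_irred : ∀ (j) (A : Matrix (Fin (2*j.1+1)) (Fin (2*j.1+1)) ℂ),
    (∀ Ω, A * rep j Ω = rep j Ω * A) →
      ∃ c : ℂ, A = c • (1 : Matrix (Fin (2*j.1+1)) (Fin (2*j.1+1)) ℂ)
  hintertwine : ∀ Ω : SU2, tensorPow (2*M) (Ω : Matrix (Fin 2) (Fin 2) ℂ) * W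
    = W * Matrix.blockDiagonal' (fun j => (rep j Ω) ⊗ₖ (1 : Matrix (Fin (dP j)) (Fin (dP j)) ℂ))

/-- The partial trace `Tr_{jR}(Π_j σ Π_j)` over `H_{jR}`, for `σ` written in the
decomposed coordinates. -/
def pTr {M : ℕ} {dP : Fin (M+1) → ℕ} (σ : Matrix (DecompIdx M dP) (DecompIdx M dP) ℂ)
    (j : Fin (M+1)) : Matrix (Fin (dP j)) (Fin (dP j)) ℂ :=
  Matrix.of fun l l' => ∑ m, σ ⟨j, (m, l)⟩ ⟨j, (m, l')⟩

end

noncomputable section Aux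

namespace SPAux

open Matrix MeasureTheory
open scoped Kronecker ComplexOrder

/-- Entries of a unitary matrix have norm at most one. -/
lemma entry_norm_le_one {m : Type*} [Fintype m] [DecidableEq m] {U : Matrix m m ℂ}
    (hU : Uᴴ * U = 1) (i j : m) : ‖U i j‖ ≤ 1 := by
  have h : (Uᴴ * U) j j = 1 := by rw [hU]; simp [Matrix.one_apply]
  rw [Matrix.mul_apply] at h
  have h2 : ∑ k, (‖U k j‖ ^ 2 : ℝ) = 1 := by
    have h3 : ((∑ k, ‖U k j‖ ^ 2 : ℝ) : ℂ) = 1 := by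
      push_cast
      rw [← h]
      refine Finset.sum_congr rfl fun k _ => ?_
      rw [Matrix.conjTranspose_apply]
      simp [RCLike.star_def, mul_comm, Complex.mul_conj']
    exact_mod_cast h3
  have hle : ‖U i j‖ ^ 2 ≤ 1 := by
    rw [← h2]
    exact Finset.single_le_sum (f := fun k => (‖U k j‖ ^ 2 : ℝ))
      (fun k _ => sq_nonneg _) (Finset.mem_univ i)
  nlinarith [norm_nonneg (U i j)]

lemma tensorPow_conjT (N : ℕ) (A : Matrix (Fin 2) (Fin 2) ℂ) :
    (tensorPow N A)ᴴ = tensorPow N Aᴴ := by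
  ext s t
  simp [tensorPow, Matrix.conjTranspose_apply, star_prod]

lemma tensorPow_mul (N : ℕ) (A B : Matrix (Fin 2) (Fin 2) ℂ) :
    tensorPow N (A * B) = tensorPow N A * tensorPow N B := by
  ext s u
  simp only [tensorPow, Matrix.mul_apply, Matrix.of_apply]
  rw [Finset.prod_univ_sum]
  rw [Fintype.piFinset_univ]
  exact Finset.sum_congr rfl fun t _ => Finset.prod_mul_distrib

lemma tensorPow_one (N : ℕ) : tensorPow N (1 : Matrix (Fin 2) (Fin 2) ℂ) = 1 := by
  ext s t
  simp only [tensorPow, Matrix.of_apply, Matrix.one_apply]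
  rw [Finset.prod_boole]
  simp [funext_iff]

lemma tensorPow_unitary (N : ℕ) (Ω : SU2) :
    (tensorPow N (Ω : Matrix (Fin 2) (Fin 2) ℂ))ᴴ * tensorPow N (Ω : Matrix (Fin 2) (Fin 2) ℂ)
      = 1 := by
  have hΩ : ((Ω : Matrix (Fin 2) (Fin 2) ℂ))ᴴ * (Ω : Matrix (Fin 2) (Fin 2) ℂ) = 1 := by
    have := (Matrix.mem_specialUnitaryGroup_iff.mp Ω.2).1
    rw [Matrix.mem_unitaryGroup_iff'] at this
    rwa [Matrix.star_eq_conjTranspose] at this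
  rw [tensorPow_conjT, ← tensorPow_mul, hΩ, tensorPow_one]

lemma tensorPow_entry_le (N : ℕ) (Ω : SU2) (s t : Fin N → Fin 2) :
    ‖tensorPow N (Ω : Matrix (Fin 2) (Fin 2) ℂ) s t‖ ≤ 1 :=
  entry_norm_le_one (tensorPow_unitary N Ω) s t

end SPAux
end Aux
noncomputable section Aux2
namespace SPAux
open Matrix MeasureTheory
open scoped Kronecker ComplexOrder

lemma measurable_entry (N : ℕ) (ρ : Matrix (Fin N → Fin 2) (Fin N → Fin 2) ℂ)
    (s t : Fin N → Fin 2) :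
    Measurable (fun Ω : SU2 =>
      (tensorPow N (Ω : Matrix (Fin 2) (Fin 2) ℂ) * ρ *
        (tensorPow N (Ω : Matrix (Fin 2) (Fin 2) ℂ))ᴴ) s t) := by
  have hcoe : Measurable (fun Ω : SU2 => (Ω : Matrix (Fin 2) (Fin 2) ℂ)) :=
    measurable_subtype_coe
  have hent : ∀ i j : Fin 2, Measurable (fun Ω : SU2 => (Ω : Matrix (Fin 2) (Fin 2) ℂ) i j) :=
    fun i j => (measurable_pi_apply j).comp ((measurable_pi_apply i).comp hcoe)
  simp only [Matrix.mul_apply, tensorPow, Matrix.conjTranspose_apply, Matrix.of_apply]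
  refine Finset.measurable_sum _ fun b _ => Measurable.mul ?_ ?_
  · refine Finset.measurable_sum _ fun a _ => Measurable.mul_const ?_ _
    exact Finset.measurable_prod _ fun k _ => hent _ _
  · exact continuous_star.measurable.comp (Finset.measurable_prod _ fun k _ => hent _ _)

lemma integrable_entry (N : ℕ) (μ : Measure SU2) [IsFiniteMeasure μ]
    (ρ : Matrix (Fin N → Fin 2) (Fin N → Fin 2) ℂ) (s t : Fin N → Fin 2) :
    Integrable (fun Ω : SU2 =>
      (tensorPow N (Ω : Matrix (Fin 2) (Fin 2) ℂ) * ρ *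
        (tensorPow N (Ω : Matrix (Fin 2) (Fin 2) ℂ))ᴴ) s t) μ := by
  refine (integrable_const (∑ a, ∑ b, ‖ρ a b‖ : ℝ)).mono'
    (measurable_entry N ρ s t).aestronglyMeasurable
    (Filter.Eventually.of_forall fun Ω => ?_)
  set U := tensorPow N (Ω : Matrix (Fin 2) (Fin 2) ℂ) with hUdef
  have hexp : (U * ρ * Uᴴ) s t = ∑ a, ∑ b, U s a * ρ a b * star (U t b) := by
    simp only [Matrix.mul_apply, Matrix.conjTranspose_apply, Finset.sum_mul]
    rw [Finset.sum_comm]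
  rw [hexp]
  calc ‖∑ a, ∑ b, U s a * ρ a b * star (U t b)‖
      ≤ ∑ a, ‖∑ b, U s a * ρ a b * star (U t b)‖ := norm_sum_le _ _
    _ ≤ ∑ a, ∑ b, ‖U s a * ρ a b * star (U t b)‖ :=
        Finset.sum_le_sum fun a _ => norm_sum_le _ _
    _ ≤ ∑ a, ∑ b, ‖ρ a b‖ := by
        refine Finset.sum_le_sum fun a _ => Finset.sum_le_sum fun b _ => ?_
        rw [norm_mul, norm_mul, norm_star]
        calc ‖U s a‖ * ‖ρ a b‖ * ‖U t b‖ ≤ 1 * ‖ρ a b‖ * 1 := by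
              gcongr
              · exact tensorPow_entry_le N Ω s a
              · exact tensorPow_entry_le N Ω t b
          _ = ‖ρ a b‖ := by ring

lemma trace_mul_twirl (N : ℕ) (μ : Measure SU2) [IsProbabilityMeasure μ]
    (P ρ : Matrix (Fin N → Fin 2) (Fin N → Fin 2) ℂ)
    (hcomm : ∀ Ω : SU2, P * tensorPow N (Ω : Matrix (Fin 2) (Fin 2) ℂ)
      = tensorPow N (Ω : Matrix (Fin 2) (Fin 2) ℂ) * P) :
    (P * twirl N μ ρ).trace = (P * ρ).trace := by
  set F : SU2 → Matrix (Fin N → Fin 2) (Fin N → Fin 2) ℂ := fun Ω =>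
    tensorPow N (Ω : Matrix (Fin 2) (Fin 2) ℂ) * ρ *
      (tensorPow N (Ω : Matrix (Fin 2) (Fin 2) ℂ))ᴴ with hF
  have hpt : ∀ Ω : SU2, (P * F Ω).trace = (P * ρ).trace := by
    intro Ω
    set U := tensorPow N (Ω : Matrix (Fin 2) (Fin 2) ℂ) with hU
    have h1 : P * F Ω = ((P * U * ρ) * Uᴴ) := by
      simp only [hF, ← Matrix.mul_assoc]; rfl
    rw [h1, Matrix.trace_mul_comm]
    have h2 : Uᴴ * (P * U * ρ) = P * ρ := by
      calc Uᴴ * (P * U * ρ) = Uᴴ * (U * P * ρ) := by rw [hcomm Ω]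
        _ = (Uᴴ * U) * (P * ρ) := by simp only [Matrix.mul_assoc]
        _ = P * ρ := by rw [tensorPow_unitary, Matrix.one_mul]
    rw [h2]
  have expand : (P * twirl N μ ρ).trace = ∑ s, ∑ t, P s t * ∫ Ω, F Ω t s ∂μ := by
    simp only [Matrix.trace, Matrix.diag_apply, Matrix.mul_apply, twirl, Matrix.of_apply, hF]
  rw [expand]
  have step1 : ∀ s : Fin N → Fin 2,
      ∑ t, P s t * ∫ Ω, F Ω t s ∂μ = ∫ Ω, ∑ t, P s t * F Ω t s ∂μ := by
    intro s
    rw [integral_finset_sum _ fun t _ => (integrable_entry N μ ρ t s).const_mul _]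
    exact Finset.sum_congr rfl fun t _ => (integral_const_mul _ _).symm
  simp only [step1]
  rw [← integral_finset_sum (f := fun s Ω => ∑ t, P s t * F Ω t s) _ fun s _ =>
    integrable_finset_sum _ fun t _ => (integrable_entry N μ ρ t s).const_mul _]
  have : ∀ Ω : SU2, ∑ s, ∑ t, P s t * F Ω t s = (P * ρ).trace := by
    intro Ω
    rw [← hpt Ω]
    simp only [Matrix.trace, Matrix.diag_apply, Matrix.mul_apply]
  simp only [this]
  simp

lemma twirl_conjT (N : ℕ) (μ : Measure SU2)
    (ρ : Matrix (Fin N → Fin 2) (Fin N → Fin 2) ℂ) :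
    (twirl N μ ρ)ᴴ = twirl N μ ρᴴ := by
  ext s t
  simp only [Matrix.conjTranspose_apply, twirl, Matrix.of_apply]
  rw [← starRingEnd_apply, ← integral_conj]
  congr 1
  funext Ω
  rw [starRingEnd_apply, ← Matrix.conjTranspose_apply]
  simp only [Matrix.conjTranspose_mul, Matrix.conjTranspose_conjTranspose, Matrix.mul_assoc]

lemma rankOne_conjT {n : Type*} (v : n → ℂ) : (rankOne v)ᴴ = rankOne v := by
  ext i j
  simp only [rankOne, Matrix.conjTranspose_apply, Matrix.vecMulVec_apply, Pi.star_apply,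
    star_mul', star_star]
  ring

lemma trace_rankOne {n : Type*} [Fintype n] (v : n → ℂ) (hv : evnorm v = 1) :
    (rankOne v).trace = 1 := by
  have h : ∑ i, ‖v i‖ ^ 2 = 1 := Real.sqrt_eq_one.mp hv
  have : (rankOne v).trace = ((∑ i, ‖v i‖ ^ 2 : ℝ) : ℂ) := by
    push_cast
    simp only [Matrix.trace, Matrix.diag_apply, rankOne, Matrix.vecMulVec_apply, Pi.star_apply]
    refine Finset.sum_congr rfl fun i _ => ?_
    simp [RCLike.star_def, Complex.mul_conj']
  rw [this, h, Complex.ofReal_one]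

end SPAux
end Aux2
noncomputable section Aux3
namespace SPAux
open Matrix MeasureTheory
open scoped Kronecker ComplexOrder

variable {n : Type*} [Fintype n] [DecidableEq n]

lemma psd_diag_re_nonneg {A : Matrix n n ℂ} (hA : A.PosSemidef) (i : n) :
    0 ≤ (A i i).re := by
  exact (Complex.le_def.mp hA.diag_nonneg).1

lemma trace_proj_le (Δ P : Matrix n n ℂ) (hΔ : Δ.IsHermitian)
    (hP : Pᴴ = P) (hP2 : P * P = P) :
    (P * Δ).trace.re ≤ (Δ.trace.re + traceNorm Δ) / 2 := by
  classical
  set V : Matrix n n ℂ := (hΔ.eigenvectorUnitary : Matrix n n ℂ) with hVdef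
  set lam : n → ℝ := hΔ.eigenvalues with hlam
  have hVV : star V * V = 1 := Matrix.mem_unitaryGroup_iff'.mp hΔ.eigenvectorUnitary.2
  have hVV' : V * star V = 1 := Matrix.mem_unitaryGroup_iff.mp hΔ.eigenvectorUnitary.2
  have hspec : Δ = V * Matrix.diagonal (RCLike.ofReal ∘ lam) * star V := hΔ.spectral_theorem
  have hofReal : ∀ r : ℝ, (RCLike.ofReal r : ℂ) = (r : ℂ) := fun r => rfl
  have hcan : ∀ X Y : Matrix n n ℂ,
      (V * X * star V) * (V * Y * star V) = V * (X * Y) * star V := by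
    intro X Y
    have h0 : star V * (V * (Y * star V)) = Y * star V := by
      rw [← Matrix.mul_assoc, hVV, Matrix.one_mul]
    simp only [Matrix.mul_assoc, h0]
  -- trace of Δ
  have htraceD : ∀ d : n → ℂ, (V * Matrix.diagonal d * star V).trace = ∑ i, d i := by
    intro d
    rw [Matrix.trace_mul_cycle, hVV, Matrix.one_mul, Matrix.trace_diagonal]
  -- trace norm of Δ
  have habs : traceNorm Δ = ∑ i, |lam i| := by
    set S : Matrix n n ℂ := V * Matrix.diagonal (fun i => ((|lam i| : ℝ) : ℂ)) * star V with hS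
    have hSps : S.PosSemidef := by
      rw [hS, Matrix.star_eq_conjTranspose]
      refine Matrix.PosSemidef.mul_mul_conjTranspose_same ?_ V
      refine Matrix.posSemidef_diagonal_iff.mpr fun i => ?_
      exact Complex.zero_le_real.mpr (abs_nonneg _)
    have hS2 : S ^ 2 = Δᴴ * Δ := by
      rw [hΔ.eq, pow_two, hS]
      calc (V * Matrix.diagonal (fun i => ((|lam i| : ℝ) : ℂ)) * star V) *
            (V * Matrix.diagonal (fun i => ((|lam i| : ℝ) : ℂ)) * star V)
          = V * (Matrix.diagonal (fun i => ((|lam i| : ℝ) : ℂ)) *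
              Matrix.diagonal (fun i => ((|lam i| : ℝ) : ℂ))) * star V := hcan _ _
        _ = V * (Matrix.diagonal (RCLike.ofReal ∘ lam) *
              Matrix.diagonal (RCLike.ofReal ∘ lam)) * star V := by
            rw [Matrix.diagonal_mul_diagonal, Matrix.diagonal_mul_diagonal]
            have hd : (fun i => ((|lam i| : ℝ) : ℂ) * ((|lam i| : ℝ) : ℂ))
                = fun i => (RCLike.ofReal ∘ lam) i * (RCLike.ofReal ∘ lam) i := by
              funext i
              simp only [Function.comp_apply, hofReal, ← Complex.ofReal_mul]
              exact congrArg _ (abs_mul_abs_self _)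
            rw [hd]
        _ = Δ * Δ := by
            rw [hspec, hcan]
    have hHH : (Δᴴ * Δ).IsHermitian := (Matrix.posSemidef_conjTranspose_mul_self Δ).1
    have hsq : cfc (fun x : ℝ => x * x) Δ = Δᴴ * Δ := by
      rw [hΔ.eq]
      exact (cfc_mul (fun x : ℝ => x) (fun x : ℝ => x) Δ).trans
        (by rw [cfc_id' (R := ℝ) (a := Δ) hΔ.isSelfAdjoint])
    have hsqrt : cfc Real.sqrt (Δᴴ * Δ) = S := by
      rw [← hsq, ← cfc_comp Real.sqrt (fun x : ℝ => x * x) Δ hΔ.isSelfAdjoint]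
      have hf : (Real.sqrt ∘ fun x : ℝ => x * x) = fun x => |x| :=
        funext fun x => Real.sqrt_mul_self_eq_abs x
      rw [hf, hΔ.cfc_eq, Matrix.IsHermitian.cfc, Unitary.conjStarAlgAut_apply, hS]
      rfl
    have e : traceNorm Δ = (cfc Real.sqrt (Δᴴ * Δ)).trace.re := by
      rw [hHH.cfc_eq, Matrix.IsHermitian.cfc, Unitary.conjStarAlgAut_apply]; rfl
    rw [e, hsqrt, hS, htraceD]
    rw [Complex.re_sum]
    refine Finset.sum_congr rfl fun i _ => ?_
    simp
  -- the diagonal coefficients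
  set C : Matrix n n ℂ := star V * P * V with hC
  have hPpsd : P.PosSemidef := by
    have := Matrix.posSemidef_conjTranspose_mul_self P
    rwa [hP, hP2] at this
  have hCpsd : C.PosSemidef := by
    rw [hC, Matrix.star_eq_conjTranspose]
    exact hPpsd.conjTranspose_mul_mul_same V
  have h1Ppsd : (1 - P).PosSemidef := by
    have h1 : (1 - P)ᴴ = 1 - P := by
      rw [Matrix.conjTranspose_sub, Matrix.conjTranspose_one, hP]
    have h2 : (1 - P) * (1 - P) = 1 - P := by
      rw [Matrix.mul_sub, Matrix.sub_mul, Matrix.sub_mul, hP2]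
      simp only [Matrix.one_mul, Matrix.mul_one]
      abel
    have := Matrix.posSemidef_conjTranspose_mul_self (1 - P)
    rwa [h1, h2] at this
  have hCc : (star V * (1 - P) * V) = 1 - C := by
    rw [Matrix.mul_sub, Matrix.mul_one, Matrix.sub_mul, hVV, hC]
  have hC1psd : (1 - C).PosSemidef := by
    rw [← hCc, Matrix.star_eq_conjTranspose]
    exact h1Ppsd.conjTranspose_mul_mul_same V
  have hc0 : ∀ i, 0 ≤ (C i i).re := fun i => psd_diag_re_nonneg hCpsd i
  have hc1 : ∀ i, (C i i).re ≤ 1 := by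
    intro i
    have := psd_diag_re_nonneg hC1psd i
    have h1 : ((1 - C) i i).re = 1 - (C i i).re := by
      simp [Matrix.sub_apply, Matrix.one_apply]
    rw [h1] at this
    linarith
  -- expand the trace
  have hPD : (P * Δ).trace = ∑ i, C i i * ((lam i : ℝ) : ℂ) := by
    rw [hspec]
    have : P * (V * Matrix.diagonal (RCLike.ofReal ∘ lam) * star V)
        = (P * V * Matrix.diagonal (RCLike.ofReal ∘ lam)) * star V := by
      simp only [Matrix.mul_assoc]
    rw [this, Matrix.trace_mul_comm, ← Matrix.mul_assoc, ← Matrix.mul_assoc, ← hC]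
    rw [Matrix.trace]
    refine Finset.sum_congr rfl fun i _ => ?_
    rw [Matrix.diag_apply, Matrix.mul_diagonal, Function.comp_apply, hofReal]
  have hretr : (P * Δ).trace.re = ∑ i, (C i i).re * lam i := by
    rw [hPD, Complex.re_sum]
    refine Finset.sum_congr rfl fun i _ => ?_
    simp [Complex.mul_re]
  have htr : Δ.trace.re = ∑ i, lam i := by
    rw [hspec, htraceD, Complex.re_sum]
    simp [hofReal]
  rw [hretr, htr, habs]
  have hterm : ∀ i : n, (C i i).re * lam i ≤ (lam i + |lam i|) / 2 := by
    intro i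
    rcases le_or_gt 0 (lam i) with h | h
    · rw [abs_of_nonneg h]
      nlinarith [hc0 i, hc1 i]
    · rw [abs_of_neg h]
      nlinarith [hc0 i, hc1 i]
  calc ∑ i, (C i i).re * lam i ≤ ∑ i, (lam i + |lam i|) / 2 :=
        Finset.sum_le_sum fun i _ => hterm i
    _ = (∑ i, lam i + ∑ i, |lam i|) / 2 := by
        rw [← Finset.sum_add_distrib, ← Finset.sum_div]

end SPAux
end Aux3
noncomputable section Aux4
namespace SPAux
open Matrix MeasureTheory
open scoped Kronecker ComplexOrder

lemma kron_one_conjT {a : ℕ} {b : ℕ} (Q : Matrix (Fin b) (Fin b) ℂ) (hQ : Qᴴ = Q) :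
    ((1 : Matrix (Fin a) (Fin a) ℂ) ⊗ₖ Q)ᴴ = (1 : Matrix (Fin a) (Fin a) ℂ) ⊗ₖ Q := by
  ext x y
  rcases x with ⟨m, l⟩
  rcases y with ⟨m', l'⟩
  rw [Matrix.conjTranspose_apply, Matrix.kroneckerMap_apply, Matrix.kroneckerMap_apply,
    star_mul']
  have h1 : star ((1 : Matrix (Fin a) (Fin a) ℂ) m' m) = (1 : Matrix (Fin a) (Fin a) ℂ) m m' := by
    by_cases h : m' = m
    · subst h; simp [Matrix.one_apply]
    · simp [Matrix.one_apply, h, Ne.symm h]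
  have h2 : star (Q l' l) = Q l l' := by rw [← Matrix.conjTranspose_apply, hQ]
  rw [h1, h2]

lemma trace_eq_sum_pTr {M : ℕ} {dP : Fin (M+1) → ℕ}
    (σ : Matrix (DecompIdx M dP) (DecompIdx M dP) ℂ) :
    σ.trace = ∑ j, (pTr σ j).trace := by
  rw [Matrix.trace, ← Finset.univ_sigma_univ, Finset.sum_sigma]
  refine Finset.sum_congr rfl fun j _ => ?_
  rw [Matrix.trace, Fintype.sum_prod_type]
  simp only [Matrix.diag_apply, pTr, Matrix.of_apply]
  rw [Finset.sum_comm]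

lemma trace_blockKron {M : ℕ} {dP : Fin (M+1) → ℕ}
    (Q : (j : Fin (M+1)) → Matrix (Fin (dP j)) (Fin (dP j)) ℂ)
    (σ : Matrix (DecompIdx M dP) (DecompIdx M dP) ℂ) :
    (Matrix.blockDiagonal' (fun j => (1 : Matrix (Fin (2*j.1+1)) (Fin (2*j.1+1)) ℂ) ⊗ₖ Q j)
      * σ).trace = ∑ j, (Q j * pTr σ j).trace := by
  rw [Matrix.trace, ← Finset.univ_sigma_univ, Finset.sum_sigma]
  refine Finset.sum_congr rfl fun j _ => ?_
  have hdiag : ∀ p : Fin (2*j.1+1) × Fin (dP j),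
      (Matrix.blockDiagonal'
          (fun j => (1 : Matrix (Fin (2*j.1+1)) (Fin (2*j.1+1)) ℂ) ⊗ₖ Q j) * σ).diag ⟨j, p⟩
        = ∑ p' : Fin (2*j.1+1) × Fin (dP j),
            ((1 : Matrix (Fin (2*j.1+1)) (Fin (2*j.1+1)) ℂ) ⊗ₖ Q j) p p' * σ ⟨j, p'⟩ ⟨j, p⟩ := by
    intro p
    rw [Matrix.diag_apply, Matrix.mul_apply, ← Finset.univ_sigma_univ, Finset.sum_sigma]
    rw [Finset.sum_eq_single_of_mem j (Finset.mem_univ j)]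
    · exact Finset.sum_congr rfl fun p' _ => by rw [Matrix.blockDiagonal'_apply_eq]
    · intro j' _ hj'
      refine Finset.sum_eq_zero fun p' _ => ?_
      rw [Matrix.blockDiagonal'_apply_ne _ _ _ (Ne.symm hj'), zero_mul]
  simp only [hdiag]
  have hRHS : (Q j * pTr σ j).trace
      = ∑ l, ∑ l', ∑ m, Q j l l' * σ ⟨j, (m, l')⟩ ⟨j, (m, l)⟩ := by
    rw [Matrix.trace]
    refine Finset.sum_congr rfl fun l _ => ?_
    rw [Matrix.diag_apply, Matrix.mul_apply]
    refine Finset.sum_congr rfl fun l' _ => ?_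
    simp only [pTr, Matrix.of_apply, Finset.mul_sum]
  rw [hRHS, Fintype.sum_prod_type]
  have hLHS : ∀ (m : Fin (2*j.1+1)) (l : Fin (dP j)),
      (∑ p' : Fin (2*j.1+1) × Fin (dP j),
          ((1 : Matrix (Fin (2*j.1+1)) (Fin (2*j.1+1)) ℂ) ⊗ₖ Q j) (m, l) p'
            * σ ⟨j, p'⟩ ⟨j, (m, l)⟩)
        = ∑ l', Q j l l' * σ ⟨j, (m, l')⟩ ⟨j, (m, l)⟩ := by
    intro m l
    rw [Fintype.sum_prod_type, Finset.sum_comm]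
    refine Finset.sum_congr rfl fun l' _ => ?_
    simp only [Matrix.kroneckerMap_apply, Matrix.one_apply, ite_mul, one_mul, zero_mul,
      Finset.sum_ite_eq, Finset.mem_univ, if_true]
  simp only [hLHS]
  rw [Finset.sum_comm]
  refine Finset.sum_congr rfl fun l _ => ?_
  rw [Finset.sum_comm]

end SPAux
end Aux4

/-- Let `ψ₁` and `ψ` be pure states on `(ℂ²)^{⊗N}` (`N = 2M` even) with
`‖E(ψ₁) − E(ψ)‖₁ ≤ δ`.  For each `j` let `H_{jQ} ⊆ H_{jP}` be the support of
`Tr_{jR}[Π_j ψ₁ Π_j]`, i.e. `Q j` is the smallest orthogonal projector fixing it, and set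
`Π' = Σ_j Π_{jR} ⊗ Π_{jQ}`.  Then `Tr[Π' ψ Π'] ≥ 1 − δ/2`. -/
theorem support_projector_captures_almost_all_weight
    (M : ℕ) (dec : SU2Decomp M) (μ : Measure SU2)
    [IsProbabilityMeasure μ] [μ.IsMulLeftInvariant]
    (δ : ℝ)
    (ψ₁ ψ : (Fin (2*M) → Fin 2) → ℂ) (hψ₁ : evnorm ψ₁ = 1) (hψ : evnorm ψ = 1)
    (hpriv : traceNorm (twirl (2*M) μ (rankOne ψ₁) - twirl (2*M) μ (rankOne ψ)) ≤ δ)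
    -- `Q j` is the projector onto the support `H_{jQ}` of `Tr_{jR}[Π_j ψ₁ Π_j]`:
    (Q : (j : Fin (M+1)) → Matrix (Fin (dec.dP j)) (Fin (dec.dP j)) ℂ)
    (hQherm : ∀ j, (Q j)ᴴ = Q j)
    (hQidem : ∀ j, Q j * Q j = Q j)
    (hQsupp : ∀ j, Q j * pTr (dec.Wᴴ * rankOne ψ₁ * dec.W) j
      = pTr (dec.Wᴴ * rankOne ψ₁ * dec.W) j)
    (hQmin : ∀ (j) (Q' : Matrix (Fin (dec.dP j)) (Fin (dec.dP j)) ℂ),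
      Q'ᴴ = Q' → Q' * Q' = Q' →
      Q' * pTr (dec.Wᴴ * rankOne ψ₁ * dec.W) j = pTr (dec.Wᴴ * rankOne ψ₁ * dec.W) j →
      Q' * Q j = Q j)
    -- `Π' = Σ_j Π_{jR} ⊗ Π_{jQ}`, transported back to `(ℂ²)^{⊗N}` by `W`:
    (Pproj : Matrix (Fin (2*M) → Fin 2) (Fin (2*M) → Fin 2) ℂ)
    (hPproj : Pproj = dec.W * Matrix.blockDiagonal'
      (fun j => (1 : Matrix (Fin (2*j.1+1)) (Fin (2*j.1+1)) ℂ) ⊗ₖ Q j) * dec.Wᴴ) :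
    1 - δ/2 ≤ (Pproj * rankOne ψ * Pproj).trace.re := by
  classical
  set W : Matrix (Fin (2*M) → Fin 2) (DecompIdx M dec.dP) ℂ := dec.W with hWdef
  set B : Matrix (DecompIdx M dec.dP) (DecompIdx M dec.dP) ℂ :=
    Matrix.blockDiagonal' (fun j => (1 : Matrix (Fin (2*j.1+1)) (Fin (2*j.1+1)) ℂ) ⊗ₖ Q j)
    with hBdef
  have cancelW : ∀ {p : Type} (Z : Matrix (DecompIdx M dec.dP) p ℂ),
      Wᴴ * (W * Z) = Z := fun Z => by
    rw [← Matrix.mul_assoc, dec.hW', Matrix.one_mul]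
  have hProd : ∀ X Y : Matrix (DecompIdx M dec.dP) (DecompIdx M dec.dP) ℂ,
      (W * X * Wᴴ) * (W * Y * Wᴴ) = W * (X * Y) * Wᴴ := by
    intro X Y
    have h0 : Wᴴ * (W * (Y * Wᴴ)) = Y * Wᴴ := cancelW _
    simp only [Matrix.mul_assoc, h0]
  have hBB : B * B = B := by
    rw [hBdef, ← Matrix.blockDiagonal'_mul]
    refine congrArg _ (funext fun j => ?_)
    rw [← Matrix.mul_kronecker_mul, Matrix.one_mul, hQidem]
  have hBH : Bᴴ = B := by
    rw [hBdef, Matrix.blockDiagonal'_conjTranspose]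
    exact congrArg _ (funext fun j => SPAux.kron_one_conjT (Q j) (hQherm j))
  have hPP : Pproj * Pproj = Pproj := by
    rw [hPproj, hProd, hBB]
  have hPH : Pprojᴴ = Pproj := by
    rw [hPproj]
    rw [Matrix.conjTranspose_mul, Matrix.conjTranspose_mul, Matrix.conjTranspose_conjTranspose,
      hBH, Matrix.mul_assoc]
  -- commutation with the representation
  have hUeq : ∀ Ω : SU2, tensorPow (2*M) (Ω : Matrix (Fin 2) (Fin 2) ℂ)
      = W * Matrix.blockDiagonal'
          (fun j => (dec.rep j Ω) ⊗ₖ (1 : Matrix (Fin (dec.dP j)) (Fin (dec.dP j)) ℂ)) * Wᴴ := by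
    intro Ω
    have h1 : tensorPow (2*M) (Ω : Matrix (Fin 2) (Fin 2) ℂ) * (W * Wᴴ)
        = W * Matrix.blockDiagonal'
            (fun j => (dec.rep j Ω) ⊗ₖ (1 : Matrix (Fin (dec.dP j)) (Fin (dec.dP j)) ℂ)) * Wᴴ := by
      rw [← Matrix.mul_assoc, dec.hintertwine Ω]
    rwa [dec.hW, Matrix.mul_one] at h1
  have hcomm : ∀ Ω : SU2, Pproj * tensorPow (2*M) (Ω : Matrix (Fin 2) (Fin 2) ℂ)
      = tensorPow (2*M) (Ω : Matrix (Fin 2) (Fin 2) ℂ) * Pproj := by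
    intro Ω
    rw [hPproj, hUeq Ω, hProd, hProd]
    congr 2
    rw [hBdef, ← Matrix.blockDiagonal'_mul, ← Matrix.blockDiagonal'_mul]
    refine congrArg _ (funext fun j => ?_)
    rw [← Matrix.mul_kronecker_mul, ← Matrix.mul_kronecker_mul, Matrix.one_mul, Matrix.one_mul,
      Matrix.mul_one, Matrix.mul_one]
  -- the twirled states have the same trace against Pproj as the original ones
  have htwirl : ∀ v : (Fin (2*M) → Fin 2) → ℂ,
      (Pproj * twirl (2*M) μ (rankOne v)).trace = (Pproj * rankOne v).trace := fun v =>
    SPAux.trace_mul_twirl (2*M) μ Pproj (rankOne v) hcomm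
  have htwirl1 : ∀ v : (Fin (2*M) → Fin 2) → ℂ,
      (twirl (2*M) μ (rankOne v)).trace = (rankOne v).trace := by
    intro v
    have := SPAux.trace_mul_twirl (2*M) μ 1 (rankOne v)
      (fun Ω => by rw [Matrix.one_mul, Matrix.mul_one])
    rwa [Matrix.one_mul, Matrix.one_mul] at this
  -- trace of Pproj against ψ₁ equals 1
  have h1 : (Pproj * rankOne ψ₁).trace = 1 := by
    have e1 : Pproj * rankOne ψ₁ = (W * B) * (Wᴴ * rankOne ψ₁) := by
      rw [hPproj]; simp only [Matrix.mul_assoc]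
    rw [e1, Matrix.trace_mul_comm]
    have e2 : (Wᴴ * rankOne ψ₁) * (W * B) = (Wᴴ * rankOne ψ₁ * W) * B := by
      simp only [Matrix.mul_assoc]
    rw [e2, Matrix.trace_mul_comm, hBdef, SPAux.trace_blockKron]
    have e3 : ∀ j, (Q j * pTr (Wᴴ * rankOne ψ₁ * W) j).trace
        = (pTr (Wᴴ * rankOne ψ₁ * W) j).trace := fun j => by rw [hQsupp j]
    rw [Finset.sum_congr rfl fun j _ => e3 j, ← SPAux.trace_eq_sum_pTr]
    have e4 : (Wᴴ * rankOne ψ₁ * W).trace = (rankOne ψ₁).trace := by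
      rw [Matrix.trace_mul_comm, ← Matrix.mul_assoc, dec.hW, Matrix.one_mul]
    rw [e4, SPAux.trace_rankOne ψ₁ hψ₁]
  -- the difference of twirled states
  set Δ : Matrix (Fin (2*M) → Fin 2) (Fin (2*M) → Fin 2) ℂ :=
    twirl (2*M) μ (rankOne ψ₁) - twirl (2*M) μ (rankOne ψ) with hΔdef
  have hHerm : Δ.IsHermitian := by
    show Δᴴ = Δ
    rw [hΔdef, Matrix.conjTranspose_sub, SPAux.twirl_conjT, SPAux.twirl_conjT,
      SPAux.rankOne_conjT, SPAux.rankOne_conjT]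
  have hΔtr : Δ.trace = 0 := by
    rw [hΔdef, Matrix.trace_sub, htwirl1, htwirl1, SPAux.trace_rankOne ψ₁ hψ₁,
      SPAux.trace_rankOne ψ hψ, sub_self]
  have hkey := SPAux.trace_proj_le Δ Pproj hHerm hPH hPP
  rw [hΔtr] at hkey
  simp only [Complex.zero_re, zero_add] at hkey
  have hkey2 : (Pproj * Δ).trace.re ≤ δ / 2 := by
    have : traceNorm Δ / 2 ≤ δ / 2 := by linarith [hpriv]
    linarith
  have hsplit : (Pproj * Δ).trace = 1 - (Pproj * rankOne ψ).trace := by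
    rw [hΔdef, Matrix.mul_sub, Matrix.trace_sub, htwirl, htwirl, h1]
  rw [hsplit] at hkey2
  have hre : (1 - (Pproj * rankOne ψ).trace).re = 1 - (Pproj * rankOne ψ).trace.re := by
    simp [Complex.sub_re]
  rw [hre] at hkey2
  have hfinal : (Pproj * rankOne ψ * Pproj).trace = (Pproj * rankOne ψ).trace := by
    rw [Matrix.trace_mul_cycle, hPP]
  rw [hfinal]
  linarith
end
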